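/- arXiv:1608.05575 — 7 statements merged into one kernel-verified Lean document; each statement's English description precedes it below -/
import Mathlib

section
/- Let a, b, c : ℝ² → ℝ, let p ∈ ℝ² be a point with δ(p) = b(p)² − a(p)c(p) > 0 and a(p) ≠ 0, let γ ∈ O(2) and η ∈ {1, −1}. Define the vectors Xᵢ = (a(p), −b(p) + (−1)ⁱ√δ(p)) and Yᵢ = (η·a(p), −η·b(p) + (−1)ⁱ√δ(p)) for i = 1, 2. If there exists a nonzero real number α such that γX₁ = αY₁ and γX₂ = αY₂ (the foliation-preserving case), then det(γ) = η and α² = 1. -/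
open Matrix

/-- at a point where `δ = b² − ac > 0` and `a ≠ 0`, with
`Xᵢ = (a, −b + (−1)ⁱ√δ)` and `Yᵢ = (η·a, −η·b + (−1)ⁱ√δ)`, if `γ ∈ O(2)` satisfies
`γX₁ = αY₁` and `γX₂ = αY₂` for some nonzero `α` (the foliation-preserving case),
then `det γ = η` and `α² = 1`. -/
theorem bde_foliation_preserving_det
    (a b c : (Fin 2 → ℝ) → ℝ) (p : Fin 2 → ℝ)
    (hδ : 0 < b p ^ 2 - a p * c p) (ha : a p ≠ 0)
    (γ : Matrix.orthogonalGroup (Fin 2) ℝ) (η : ℝ) (hη : η = 1 ∨ η = -1)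
    (α : ℝ) (hα : α ≠ 0)
    (h1 : (γ : Matrix (Fin 2) (Fin 2) ℝ).mulVec
        ![a p, -b p + (-1 : ℝ) ^ (1 : ℕ) * Real.sqrt (b p ^ 2 - a p * c p)]
      = α • ![η * a p, -(η * b p) + (-1 : ℝ) ^ (1 : ℕ) * Real.sqrt (b p ^ 2 - a p * c p)])
    (h2 : (γ : Matrix (Fin 2) (Fin 2) ℝ).mulVec
        ![a p, -b p + (-1 : ℝ) ^ (2 : ℕ) * Real.sqrt (b p ^ 2 - a p * c p)]
      = α • ![η * a p, -(η * b p) + (-1 : ℝ) ^ (2 : ℕ) * Real.sqrt (b p ^ 2 - a p * c p)]) :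
    (γ : Matrix (Fin 2) (Fin 2) ℝ).det = η ∧ α ^ 2 = 1 := by
  set M := (γ : Matrix (Fin 2) (Fin 2) ℝ) with hM
  set s := Real.sqrt (b p ^ 2 - a p * c p) with hs
  have hspos : 0 < s := Real.sqrt_pos.mpr hδ
  have h10 := congrFun h1 0
  have h11 := congrFun h1 1
  have h20 := congrFun h2 0
  have h21 := congrFun h2 1
  simp [Matrix.mulVec, dotProduct, Fin.sum_univ_two, Matrix.cons_val_zero,
    Matrix.cons_val_one, Matrix.head_cons] at h10 h11 h20 h21
  have hM01 : M 0 1 = 0 := by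
    have e : M 0 1 * s = 0 * s := by linear_combination (h20 - h10) / 2
    simpa using mul_right_cancel₀ hspos.ne' e
  have hM00 : M 0 0 = α * η := by
    have e : M 0 0 * a p = (α * η) * a p := by linear_combination h20 + (b p - s) * hM01
    exact mul_right_cancel₀ ha e
  have hM11 : M 1 1 = α := by
    have e : M 1 1 * s = α * s := by linear_combination (h21 - h11) / 2
    exact mul_right_cancel₀ hspos.ne' e
  have hM10 : M 1 0 * a p = α * b p - α * η * b p := by
    linear_combination (h11 + h21) / 2 + b p * hM11
  have horth : M * Mᵀ = 1 := (Matrix.mem_orthogonalGroup_iff (Fin 2) ℝ).mp γ.2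
  have horth' : Mᵀ * M = 1 := (Matrix.mem_orthogonalGroup_iff' (Fin 2) ℝ).mp γ.2
  have h00 := congrFun (congrFun horth' 1) 1
  have h11' := congrFun (congrFun horth' 0) 0
  simp [Matrix.mul_apply, Matrix.transpose_apply, Fin.sum_univ_two, Matrix.one_apply] at h00 h11'
  -- h00 : M 0 1 * M 0 1 + M 1 1 * M 1 1 = 1
  have hη2 : η ^ 2 = 1 := by rcases hη with h | h <;> simp [h]
  have hα2 : α ^ 2 = 1 := by
    linear_combination h00 - (M 1 1 + α) * hM11 - M 0 1 * hM01
  have hM10' : M 1 0 = 0 := by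
    have hz : M 1 0 * M 1 0 = 0 := by
      linear_combination h11' - (M 0 0 + α * η) * hM00 - η ^ 2 * hα2 - hη2
    exact (mul_self_eq_zero).mp hz
  refine ⟨?_, hα2⟩
  rw [Matrix.det_fin_two, hM00, hM01, hM10', hM11]
  linear_combination η * hα2
end

section
/- Let a, b, c : ℝ² → ℝ, let p ∈ ℝ² be a point with δ(p) = b(p)² − a(p)c(p) > 0 and a(p) ≠ 0, let γ ∈ O(2) and η ∈ {1, −1}. Define the vectors Xᵢ = (a(p), −b(p) + (−1)ⁱ√δ(p)) and Yᵢ = (η·a(p), −η·b(p) + (−1)ⁱ√δ(p)) for i = 1, 2. If there exists a nonzero real number α such that γX₁ = αY₂ and γX₂ = αY₁ (the foliation-interchanging case), then det(γ) = −η and α² = 1. -/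
open Matrix

set_option maxHeartbeats 1000000

/-- at a point where `δ = b² − ac > 0` and `a ≠ 0`, with
`Xᵢ = (a, −b + (−1)ⁱ√δ)` and `Yᵢ = (η·a, −η·b + (−1)ⁱ√δ)`, if `γ ∈ O(2)` satisfies
`γX₁ = αY₂` and `γX₂ = αY₁` for some nonzero `α` (the foliation-interchanging case),
then `det γ = −η` and `α² = 1`. -/
theorem bde_foliation_interchanging_det
    (a b c : (Fin 2 → ℝ) → ℝ) (p : Fin 2 → ℝ)
    (hδ : 0 < b p ^ 2 - a p * c p) (ha : a p ≠ 0)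
    (γ : Matrix.orthogonalGroup (Fin 2) ℝ) (η : ℝ) (hη : η = 1 ∨ η = -1)
    (α : ℝ) (hα : α ≠ 0)
    (h1 : (γ : Matrix (Fin 2) (Fin 2) ℝ).mulVec
        ![a p, -b p + (-1 : ℝ) ^ (1 : ℕ) * Real.sqrt (b p ^ 2 - a p * c p)]
      = α • ![η * a p, -(η * b p) + (-1 : ℝ) ^ (2 : ℕ) * Real.sqrt (b p ^ 2 - a p * c p)])
    (h2 : (γ : Matrix (Fin 2) (Fin 2) ℝ).mulVec
        ![a p, -b p + (-1 : ℝ) ^ (2 : ℕ) * Real.sqrt (b p ^ 2 - a p * c p)]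
      = α • ![η * a p, -(η * b p) + (-1 : ℝ) ^ (1 : ℕ) * Real.sqrt (b p ^ 2 - a p * c p)]) :
    (γ : Matrix (Fin 2) (Fin 2) ℝ).det = -η ∧ α ^ 2 = 1 := by
  obtain ⟨hU, -⟩ := γ.2
  set G : Matrix (Fin 2) (Fin 2) ℝ := (γ : Matrix (Fin 2) (Fin 2) ℝ) with hG
  set A := a p; set B := b p
  set s := Real.sqrt (B ^ 2 - A * c p) with hs
  have hs2 : s ^ 2 = B ^ 2 - A * c p := Real.sq_sqrt hδ.le
  have hspos : 0 < s := Real.sqrt_pos.mpr hδ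
  have e1 := congrFun h1 0
  have e2 := congrFun h1 1
  have e3 := congrFun h2 0
  have e4 := congrFun h2 1
  simp [Matrix.mulVec, dotProduct, Fin.sum_univ_two] at e1 e2 e3 e4
  have o00 := congrFun (congrFun hU 0) 0
  have o01 := congrFun (congrFun hU 0) 1
  have o11 := congrFun (congrFun hU 1) 1
  simp [Matrix.mul_apply, Fin.sum_univ_two, Matrix.one_apply, Matrix.star_apply,
    Matrix.conjTranspose_apply] at o00 o01 o11
  have hg01 : G 0 1 = 0 := by
    have : G 0 1 * (2 * s) = 0 := by nlinarith [e1, e3]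
    have h2s : (2 : ℝ) * s ≠ 0 := by positivity
    exact (mul_eq_zero.mp this).resolve_right h2s
  have hg11 : G 1 1 = -α := by
    have : G 1 1 * (2 * s) = -α * (2 * s) := by nlinarith [e2, e4]
    exact mul_right_cancel₀ (by positivity) this
  have hα2 : α ^ 2 = 1 := by
    rw [hg01, hg11] at o11; nlinarith [o11]
  have hg10 : G 1 0 = 0 := by
    have := o01
    rw [hg01, hg11] at this
    have h' : G 1 0 * (-α) = 0 := by linarith
    exact (mul_eq_zero.mp h').resolve_right (by simpa using hα)
  have hg00 : G 0 0 = α * η := by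
    rw [hg01] at e1
    have h' : G 0 0 * A = α * η * A := by linarith [e1]
    exact mul_right_cancel₀ ha h'
  have hη2 : η ^ 2 = 1 := by rcases hη with h | h <;> simp [h]
  constructor
  · have hd : G.det = G 0 0 * G 1 1 - G 0 1 * G 1 0 := Matrix.det_fin_two G
    rw [hd, hg00, hg01, hg10, hg11]
    linear_combination (-η) * hα2
  · exact hα2
end

section
/- Let Γ be a group acting linearly on real vector spaces V and W, and let η : Γ → {1, −1} be a group homomorphism with kernel Γ₊ and some δ ∈ Γ with η(δ) = −1. Suppose (G_k)_{k ∈ K} is a family of Γ₊-equivariant maps V → W such that every Γ₊-equivariant map g : V → W can be written as a finite sum g = Σ p_k G_k with each coefficient p_k : V → ℝ a Γ-invariant function. Then every Γ-equivariant map g : V → W can be written as a finite sum g = Σ p_k R⃗(G_k) with each p_k a Γ-invariant function. -/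
/-- The vector Reynolds operator `R⃗(g)(x) = (g(x) + δ⁻¹·g(δ·x))/2`. -/
noncomputable def reynoldsRvec {Γ V W : Type*} [Group Γ]
    [AddCommGroup V] [Module ℝ V] [AddCommGroup W] [Module ℝ W]
    [DistribMulAction Γ V] [SMulCommClass Γ ℝ V]
    [DistribMulAction Γ W] [SMulCommClass Γ ℝ W]
    (δ : Γ) (g : V → W) : V → W :=
  fun x => (2⁻¹ : ℝ) • (g x + δ⁻¹ • g (δ • x))

/-- The vector η-Reynolds operator `S⃗(g)(x) = (g(x) − δ⁻¹·g(δ·x))/2`. -/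
noncomputable def reynoldsSvec {Γ V W : Type*} [Group Γ]
    [AddCommGroup V] [Module ℝ V] [AddCommGroup W] [Module ℝ W]
    [DistribMulAction Γ V] [SMulCommClass Γ ℝ V]
    [DistribMulAction Γ W] [SMulCommClass Γ ℝ W]
    (δ : Γ) (g : V → W) : V → W :=
  fun x => (2⁻¹ : ℝ) • (g x - δ⁻¹ • g (δ • x))

/-- if `(G_k)` is a family of `Γ₊`-equivariant maps such that every
`Γ₊`-equivariant map is a finite sum `Σ p_k G_k` with `Γ`-invariant coefficients, then
every `Γ`-equivariant map is a finite sum `Σ p_k R⃗(G_k)` with `Γ`-invariant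
coefficients. -/
theorem gamma_equivariants_generated_by_reynolds_images
    {Γ V W K : Type*} [Group Γ]
    [AddCommGroup V] [Module ℝ V] [AddCommGroup W] [Module ℝ W]
    [DistribMulAction Γ V] [SMulCommClass Γ ℝ V]
    [DistribMulAction Γ W] [SMulCommClass Γ ℝ W]
    (η : Γ →* ℝˣ) (hη : ∀ γ : Γ, (η γ : ℝ) = 1 ∨ (η γ : ℝ) = -1)
    (δ : Γ) (hδ : (η δ : ℝ) = -1)
    (G : K → V → W)
    (hG : ∀ k : K, ∀ σ : Γ, (η σ : ℝ) = 1 → ∀ x : V, G k (σ • x) = σ • G k x)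
    (hgen : ∀ g : V → W,
      (∀ σ : Γ, (η σ : ℝ) = 1 → ∀ x : V, g (σ • x) = σ • g x) →
      ∃ (s : Finset K) (p : K → V → ℝ),
        (∀ k : K, ∀ γ : Γ, ∀ x : V, p k (γ • x) = p k x) ∧
        ∀ x : V, g x = ∑ k ∈ s, p k x • G k x) :
    ∀ g : V → W, (∀ γ : Γ, ∀ x : V, g (γ • x) = γ • g x) →
      ∃ (s : Finset K) (p : K → V → ℝ),
        (∀ k : K, ∀ γ : Γ, ∀ x : V, p k (γ • x) = p k x) ∧
        ∀ x : V, g x = ∑ k ∈ s, p k x • reynoldsRvec δ (G k) x := by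
  intro g hgΓ
  obtain ⟨s, p, hp, hsum⟩ := hgen g (fun σ _ x => hgΓ σ x)
  refine ⟨s, p, hp, fun x => ?_⟩
  have key : ∀ k ∈ s, p k x • reynoldsRvec δ (G k) x
      = (2⁻¹ : ℝ) • (p k x • G k x + δ⁻¹ • (p k (δ • x) • G k (δ • x))) := by
    intro k _
    rw [hp k δ x, smul_comm (δ⁻¹) (p k x)]
    simp [reynoldsRvec, smul_add, smul_smul, mul_comm]
  rw [Finset.sum_congr rfl key, ← Finset.smul_sum, Finset.sum_add_distrib, ← Finset.smul_sum, ← hsum x, ← hsum (δ • x),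
    hgΓ δ x, inv_smul_smul]
  rw [← two_smul ℝ (g x), smul_smul]
  norm_num
end

section
/- Let n ≥ 3 and let ρ be the rotation matrix of angle 2π/n. Polynomials a, b, c ∈ ℝ[x,y] satisfy the equivariance condition B(ρp) = ρ B(p) ρᵀ for all p ∈ ℝ² (where B(p) = [[c(p), b(p)], [b(p), a(p)]]) if and only if there exist ρ-invariant polynomials p₁, p₂, p₃, p₄, p₅ ∈ ℝ[x,y] such that a = p₁ + (y² − x²)p₂ + 2xy·p₃ − A₁p₄ − A₂p₅, b = 2xy·p₂ + (x² − y²)p₃ + A₁p₅ − A₂p₄, and c = p₁ + (x² − y²)p₂ − 2xy·p₃ + A₁p₄ + A₂p₅, where A₁ = Re((x + iy)^{n−2}) and A₂ = Im((x + iy)^{n−2}). -/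
/-!
Identify `ℝ²` with `ℂ` through `z = x + iy`, so that `ρ` acts by `z ↦ ζ z` with `ζ = e^{2πi/n}`.
Conjugation by `ρ` preserves the trace `a + c` of `B` and multiplies `g = (c - a)/2 + i b` by `ζ²`.
Written as a polynomial in `z` and `z̄`, `g` then only contains monomials `z^j z̄^k` with
`j - k ≡ 2 (mod n)`. Such a monomial is `z²` times an invariant monomial when `j ≥ 2`, and
`z̄^(n-2)` times one otherwise, since then `k ≥ n - 2`. The real and imaginary parts of the two
quotients are `p₂, p₃` and `p₄, p₅`, and `p₁ = (a + c)/2`.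
-/

open Matrix

/-- The rotation matrix of angle `θ`. -/
noncomputable def rotMat (θ : ℝ) : Matrix (Fin 2) (Fin 2) ℝ :=
  !![Real.cos θ, -Real.sin θ; Real.sin θ, Real.cos θ]

/-- The symmetric-matrix-valued map `B(p) = [[c(p), b(p)], [b(p), a(p)]]` of a quadratic
differential form with polynomial coefficients `a, b, c ∈ ℝ[x,y]`. -/
noncomputable def bdeMatrix (a b c : MvPolynomial (Fin 2) ℝ) (p : Fin 2 → ℝ) :
    Matrix (Fin 2) (Fin 2) ℝ :=
  !![MvPolynomial.eval p c, MvPolynomial.eval p b;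
     MvPolynomial.eval p b, MvPolynomial.eval p a]

/-- `Re((x + iy)^m)` evaluated at `(x, y) = (v 0, v 1)`. -/
noncomputable def rePow (m : ℕ) (v : Fin 2 → ℝ) : ℝ :=
  (((v 0 : ℂ) + Complex.I * (v 1 : ℂ)) ^ m).re

/-- `Im((x + iy)^m)` evaluated at `(x, y) = (v 0, v 1)`. -/
noncomputable def imPow (m : ℕ) (v : Fin 2 → ℝ) : ℝ :=
  (((v 0 : ℂ) + Complex.I * (v 1 : ℂ)) ^ m).im

open MvPolynomial Complex ComplexConjugate

theorem rotMat_mul_mul_transpose_eq_iff (θ a b c a' b' c' : ℝ) :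
    !![c', b'; b', a'] = rotMat θ * !![c, b; b, a] * (rotMat θ)ᵀ ↔
      a' + c' = a + c ∧
        ((2⁻¹ * (c' - a') : ℝ) + b' * I : ℂ) = exp (θ * I) ^ 2 * ((2⁻¹ * (c - a) : ℝ) + b * I) := by
  set co := Real.cos θ
  set s := Real.sin θ
  have hpy : s ^ 2 + co ^ 2 = 1 := Real.sin_sq_add_cos_sq θ
  have hprod : rotMat θ * !![c, b; b, a] * (rotMat θ)ᵀ =
      !![co ^ 2 * c - 2 * co * s * b + s ^ 2 * a, co * s * (c - a) + (co ^ 2 - s ^ 2) * b;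
        co * s * (c - a) + (co ^ 2 - s ^ 2) * b, s ^ 2 * c + 2 * co * s * b + co ^ 2 * a] := by
    ext i j
    fin_cases i <;> fin_cases j <;> simp [rotMat, Matrix.mul_apply, Fin.sum_univ_two] <;> ring
  have hsq : exp (θ * I) ^ 2 = ((co ^ 2 - s ^ 2 : ℝ) : ℂ) + (2 * co * s : ℝ) * I := by
    rw [exp_mul_I, ← ofReal_cos, ← ofReal_sin]
    simp only [ofReal_sub, ofReal_pow, ofReal_mul, ofReal_ofNat]
    linear_combination (s : ℂ) ^ 2 * I_sq
  rw [hprod, hsq, ← Matrix.ext_iff, Complex.ext_iff]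
  simp only [Fin.forall_fin_two, of_apply, cons_val_zero, cons_val_one, cons_val_fin_one,
    add_re, add_im, mul_re, mul_im, ofReal_re, ofReal_im, I_re, I_im]
  constructor
  · rintro ⟨⟨rfl, rfl⟩, -, rfl⟩
    exact ⟨by linear_combination (a + c) * hpy, by ring, by ring⟩
  · rintro ⟨htr, hre, him⟩
    exact ⟨⟨by linear_combination (1 / 2) * htr + hre - ((a + c) / 2) * hpy,
      by linear_combination him⟩, by linear_combination him,
      by linear_combination (1 / 2) * htr - hre - ((a + c) / 2) * hpy⟩

theorem eval_aeval {R σ τ : Type*} [CommSemiring R] (x : τ → R) (g : σ → MvPolynomial τ R)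
    (p : MvPolynomial σ R) : eval x (aeval g p) = eval (fun i => eval x (g i)) p := by
  induction p using MvPolynomial.induction_on <;> simp_all

theorem monomial_mem_restrictSupport {R σ : Type*} [CommSemiring R] {s : Set (σ →₀ ℕ)}
    {d : σ →₀ ℕ} (hd : d ∈ s) (c : R) : monomial d c ∈ restrictSupport R s := by
  classical
  exact (Finset.coe_subset.2 support_monomial_subset).trans (by simpa using hd)

theorem le_of_sub_modEq_two {n j l : ℕ} (hj : j < 2) (h : (j : ℤ) - l ≡ 2 [ZMOD n]) :
    n - 2 ≤ l := by
  obtain ⟨k, hk⟩ := Int.modEq_iff_dvd.1 h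
  have hk1 : 1 ≤ k := by nlinarith
  have : (n : ℤ) ≤ n * k := by nlinarith
  omega

section Twist

variable {K : Type*} [Field K]

theorem IsPrimitiveRoot.pow_mul_inv_pow_eq_pow_iff {ζ : K} {n : ℕ} (hζ : IsPrimitiveRoot ζ n)
    (hn : n ≠ 0) (j l m : ℕ) : ζ ^ j * ζ⁻¹ ^ l = ζ ^ m ↔ (j : ℤ) - l ≡ m [ZMOD n] := by
  have hζ0 : ζ ≠ 0 := hζ.ne_zero hn
  rw [Int.modEq_iff_dvd, ← hζ.zpow_eq_one_iff_dvd, zpow_sub₀ hζ0, zpow_sub₀ hζ0, inv_pow,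
    div_eq_one_iff_eq (by simp [hζ0]), eq_comm]
  simp [div_eq_mul_inv]

/-- With `X 0 = z` and `X 1 = z̄`, this is the rotation `z ↦ ζ z` when `|ζ| = 1`. -/
noncomputable def twist (ζ : K) : MvPolynomial (Fin 2) K →ₐ[K] MvPolynomial (Fin 2) K :=
  aeval ![C ζ * X 0, C ζ⁻¹ * X 1]

theorem eval_twist (ζ : K) (x : Fin 2 → K) (p : MvPolynomial (Fin 2) K) :
    eval x (twist ζ p) = eval ![ζ * x 0, ζ⁻¹ * x 1] p := by
  rw [twist, eval_aeval]
  refine congrArg (eval · p) (funext fun i => ?_)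
  fin_cases i <;> simp

theorem twist_monomial (ζ : K) (d : Fin 2 →₀ ℕ) (c : K) :
    twist ζ (monomial d c) = monomial d (ζ ^ d 0 * ζ⁻¹ ^ d 1 * c) := by
  rw [twist, aeval_monomial, Finsupp.prod_fintype _ _ (by simp), Fin.prod_univ_two,
    monomial_eq, Finsupp.prod_fintype _ _ (by simp), Fin.prod_univ_two]
  simp only [Matrix.cons_val_zero, Matrix.cons_val_one, Matrix.cons_val_fin_one, mul_pow,
    ← C_pow, algebraMap_eq, C_mul]
  ring

theorem coeff_twist (ζ : K) (p : MvPolynomial (Fin 2) K) (d : Fin 2 →₀ ℕ) :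
    coeff d (twist ζ p) = ζ ^ d 0 * ζ⁻¹ ^ d 1 * coeff d p := by
  induction p using MvPolynomial.induction_on' with
  | monomial e c =>
    rw [twist_monomial, coeff_monomial, coeff_monomial]
    split_ifs with h <;> simp [h]
  | add p q hp hq => simp only [map_add, coeff_add, hp, hq]; ring

def chargeSupport (n : ℕ) (m : ℤ) : Set (Fin 2 →₀ ℕ) :=
  {d | (d 0 : ℤ) - d 1 ≡ m [ZMOD n]}

theorem twist_eq_C_pow_mul_iff {ζ : K} {n : ℕ} (hζ : IsPrimitiveRoot ζ n) (hn : n ≠ 0) (m : ℕ)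
    (p : MvPolynomial (Fin 2) K) :
    twist ζ p = C (ζ ^ m) * p ↔ p ∈ restrictSupport K (chargeSupport n m) := by
  simp only [mem_restrictSupport_iff, MvPolynomial.ext_iff, coeff_twist, coeff_C_mul,
    Set.subset_def, Finset.mem_coe, mem_support_iff, chargeSupport, Set.mem_ofPred_eq,
    ← hζ.pow_mul_inv_pow_eq_pow_iff hn]
  refine forall_congr' fun d => ?_
  by_cases hd : coeff d p = 0 <;> simp [hd]

theorem restrictSupport_chargeSupport_two_le {n : ℕ} (hn : 2 ≤ n) :
    restrictSupport K (chargeSupport n 2) ≤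
      (restrictSupport K (chargeSupport n 0)).map (LinearMap.mulLeft K (X 0 ^ 2)) ⊔
        (restrictSupport K (chargeSupport n 0)).map (LinearMap.mulLeft K (X 1 ^ (n - 2))) := by
  rw [restrictSupport_eq_span, Submodule.span_le]
  rintro _ ⟨d, hd, rfl⟩
  have hd' := Int.modEq_iff_dvd.1 hd
  by_cases h0 : 2 ≤ d 0
  · refine Submodule.mem_sup_left ⟨monomial (d - Finsupp.single 0 2) 1,
      monomial_mem_restrictSupport (Int.modEq_iff_dvd.2 ?_) 1, ?_⟩
    · simp only [Fin.isValue, Finsupp.coe_tsub, Pi.sub_apply, Finsupp.single_eq_same,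
        Nat.cast_sub h0, Nat.cast_ofNat, ne_eq, one_ne_zero, not_false_eq_true,
        Finsupp.single_eq_of_ne, tsub_zero, zero_sub, neg_sub]
      rw [show (d 1 : ℤ) - (d 0 - 2) = 2 - (d 0 - d 1) by ring]
      exact hd'
    · rw [LinearMap.mulLeft_apply, X_pow_eq_monomial, monomial_mul, one_mul,
        add_tsub_cancel_of_le (Finsupp.single_le_iff.2 h0)]
  · have h1 : n - 2 ≤ d 1 := le_of_sub_modEq_two (not_le.1 h0) hd
    refine Submodule.mem_sup_right ⟨monomial (d - Finsupp.single 1 (n - 2)) 1,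
      monomial_mem_restrictSupport (Int.modEq_iff_dvd.2 ?_) 1, ?_⟩
    · simp only [Fin.isValue, Finsupp.coe_tsub, Pi.sub_apply, ne_eq, zero_ne_one,
        not_false_eq_true, Finsupp.single_eq_of_ne, tsub_zero, Finsupp.single_eq_same,
        Nat.cast_sub h1, Nat.cast_sub hn, Nat.cast_ofNat, zero_sub, neg_sub]
      rw [show (d 1 : ℤ) - (n - 2) - d 0 = 2 - (d 0 - d 1) - n by ring]
      exact hd'.sub dvd_rfl
    · rw [LinearMap.mulLeft_apply, X_pow_eq_monomial, monomial_mul, one_mul,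
        add_tsub_cancel_of_le (Finsupp.single_le_iff.2 h1)]

end Twist

noncomputable def planeToComplex (v : Fin 2 → ℝ) : ℂ := v 0 + I * v 1

/-- Complex polynomials in two variables, evaluated at `conjPair v = (z, z̄)`, are the
complex-valued polynomial functions of `v = (x, y)`. -/
noncomputable def conjPair (v : Fin 2 → ℝ) : Fin 2 → ℂ :=
  ![planeToComplex v, conj (planeToComplex v)]

theorem conj_exp_ofReal_mul_I (θ : ℝ) : conj (exp (θ * I)) = (exp (θ * I))⁻¹ := by
  rw [← exp_conj, ← exp_neg, map_mul, conj_ofReal, conj_I, mul_neg]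

theorem planeToComplex_rotMat_mulVec (θ : ℝ) (v : Fin 2 → ℝ) :
    planeToComplex (rotMat θ *ᵥ v) = exp (θ * I) * planeToComplex v := by
  rw [exp_mul_I, ← ofReal_cos, ← ofReal_sin]
  apply Complex.ext <;>
    simp [planeToComplex, rotMat, Matrix.mulVec, dotProduct, Fin.sum_univ_two] <;> ring

theorem eval_conjPair_rotMat_mulVec (θ : ℝ) (v : Fin 2 → ℝ) (p : MvPolynomial (Fin 2) ℂ) :
    eval (conjPair (rotMat θ *ᵥ v)) p = eval (conjPair v) (twist (exp (θ * I)) p) := by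
  rw [eval_twist, conjPair, planeToComplex_rotMat_mulVec, map_mul, conj_exp_ofReal_mul_I]
  rfl

noncomputable def toXY : MvPolynomial (Fin 2) ℂ →ₐ[ℂ] MvPolynomial (Fin 2) ℂ :=
  aeval ![X 0 + C I * X 1, X 0 - C I * X 1]

noncomputable def toZW : MvPolynomial (Fin 2) ℂ →ₐ[ℂ] MvPolynomial (Fin 2) ℂ :=
  aeval ![C (1 / 2) * (X 0 + X 1), C (-I / 2) * (X 0 - X 1)]

theorem eval_ofReal_toXY (p : MvPolynomial (Fin 2) ℂ) (v : Fin 2 → ℝ) :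
    eval (fun i => (v i : ℂ)) (toXY p) = eval (conjPair v) p := by
  rw [toXY, eval_aeval]
  refine congrArg (eval · p) (funext fun i => ?_)
  fin_cases i <;> simp [conjPair, planeToComplex, mul_comm, sub_eq_add_neg]

theorem eval_conjPair_toZW (p : MvPolynomial (Fin 2) ℂ) (v : Fin 2 → ℝ) :
    eval (conjPair v) (toZW p) = eval (fun i => (v i : ℂ)) p := by
  rw [toZW, eval_aeval]
  refine congrArg (eval · p) (funext fun i => ?_)
  fin_cases i <;> simp [conjPair, planeToComplex]
  · ring
  · linear_combination (-v 1 : ℂ) * I_sq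

theorem toZW_toXY (p : MvPolynomial (Fin 2) ℂ) : toZW (toXY p) = p := by
  refine MvPolynomial.funext fun x => ?_
  rw [toZW, toXY, eval_aeval, eval_aeval]
  refine congrArg (eval · p) (funext fun i => ?_)
  fin_cases i <;> simp
  · linear_combination (x 1 - x 0) / 2 * I_sq
  · linear_combination (x 0 - x 1) / 2 * I_sq

theorem eq_of_eval_conjPair_eq {p q : MvPolynomial (Fin 2) ℂ}
    (h : ∀ v, eval (conjPair v) p = eval (conjPair v) q) : p = q := by
  have hreal : ∀ i : Fin 2, (Set.range ((↑) : ℝ → ℂ)).Infinite := fun _ =>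
    Set.infinite_range_of_injective ofReal_injective
  refine Function.LeftInverse.injective toZW_toXY (funext_set _ hreal fun x hx => ?_)
  choose v hv using fun i => hx i (Set.mem_univ i)
  obtain rfl : (fun i => (v i : ℂ)) = x := funext hv
  rw [eval_ofReal_toXY, eval_ofReal_toXY, h]

theorem exists_eval_ofReal_eq_re_add_im_mul_I {σ : Type*} (p : MvPolynomial σ ℂ) :
    ∃ u w : MvPolynomial σ ℝ, ∀ v : σ → ℝ,
      eval (fun i => (v i : ℂ)) p = eval v u + eval v w * I := by
  induction p using MvPolynomial.induction_on with
  | C a => exact ⟨C a.re, C a.im, fun v => by simp [re_add_im]⟩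
  | add p q hp hq =>
    obtain ⟨u, w, h⟩ := hp
    obtain ⟨u', w', h'⟩ := hq
    exact ⟨u + u', w + w', fun v => by simp [h, h']; ring⟩
  | mul_X p i hp =>
    obtain ⟨u, w, h⟩ := hp
    exact ⟨u * X i, w * X i, fun v => by simp [h]; ring⟩

theorem exists_eval_conjPair_eq_re_add_im_mul_I (p : MvPolynomial (Fin 2) ℂ) :
    ∃ u w : MvPolynomial (Fin 2) ℝ, ∀ v, eval (conjPair v) p = eval v u + eval v w * I := by
  obtain ⟨u, w, h⟩ := exists_eval_ofReal_eq_re_add_im_mul_I (toXY p)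
  exact ⟨u, w, fun v => by rw [← eval_ofReal_toXY, h]⟩

theorem exists_eval_conjPair_eq (u w : MvPolynomial (Fin 2) ℝ) :
    ∃ p : MvPolynomial (Fin 2) ℂ, ∀ v, eval (conjPair v) p = eval v u + eval v w * I := by
  refine ⟨toZW (map ofRealHom u + C I * map ofRealHom w), fun v => ?_⟩
  rw [eval_conjPair_toZW, map_add, map_mul, eval_C, ← ofRealHom_eq_coe, ← ofRealHom_eq_coe,
    map_eval, map_eval, mul_comm]
  rfl

theorem add_mul_I_eq_sq_mul_add_conj_pow_mul_iff (v : Fin 2 → ℝ) (m : ℕ)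
    (U W P₂ P₃ P₄ P₅ : ℝ) :
    (U + W * I : ℂ) = planeToComplex v ^ 2 * (P₂ + P₃ * I)
        + conj (planeToComplex v) ^ m * (P₄ + P₅ * I) ↔
      U = (v 0 ^ 2 - v 1 ^ 2) * P₂ - 2 * v 0 * v 1 * P₃ + rePow m v * P₄ + imPow m v * P₅ ∧
      W = 2 * v 0 * v 1 * P₂ + (v 0 ^ 2 - v 1 ^ 2) * P₃ + rePow m v * P₅ - imPow m v * P₄ := by
  have hre : rePow m v = (planeToComplex v ^ m).re := rfl
  have him : imPow m v = (planeToComplex v ^ m).im := rfl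
  rw [Complex.ext_iff, hre, him, ← map_pow]
  generalize planeToComplex v ^ m = w
  simp [planeToComplex, pow_two]
  constructor <;> rintro ⟨h1, h2⟩ <;> constructor <;> linarith

def IsInvariantUnder (M : Matrix (Fin 2) (Fin 2) ℝ) (p : MvPolynomial (Fin 2) ℝ) : Prop :=
  ∀ v, eval (M *ᵥ v) p = eval v p

theorem isInvariantUnder_of_eval_conjPair {M : Matrix (Fin 2) (Fin 2) ℝ}
    {p : MvPolynomial (Fin 2) ℂ} (hp : ∀ v, eval (conjPair (M *ᵥ v)) p = eval (conjPair v) p)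
    {u w : MvPolynomial (Fin 2) ℝ} (h : ∀ v, eval (conjPair v) p = eval v u + eval v w * I) :
    IsInvariantUnder M u ∧ IsInvariantUnder M w := by
  simp only [IsInvariantUnder, ← forall_and]
  intro v
  have := hp v
  rw [h, h, Complex.ext_iff] at this
  simpa using this

theorem forall_eval_rotMat_eq_exp_sq_mul_iff {n : ℕ} (hn : 2 ≤ n) (u w : MvPolynomial (Fin 2) ℝ) :
    (∀ v, (eval (rotMat (2 * Real.pi / n) *ᵥ v) u + eval (rotMat (2 * Real.pi / n) *ᵥ v) w * I : ℂ)
        = exp (↑(2 * Real.pi / n) * I) ^ 2 * (eval v u + eval v w * I)) ↔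
      ∃ p₂ p₃ p₄ p₅ : MvPolynomial (Fin 2) ℝ,
        IsInvariantUnder (rotMat (2 * Real.pi / n)) p₂ ∧
        IsInvariantUnder (rotMat (2 * Real.pi / n)) p₃ ∧
        IsInvariantUnder (rotMat (2 * Real.pi / n)) p₄ ∧
        IsInvariantUnder (rotMat (2 * Real.pi / n)) p₅ ∧
        ∀ v, eval v u = (v 0 ^ 2 - v 1 ^ 2) * eval v p₂ - 2 * v 0 * v 1 * eval v p₃
              + rePow (n - 2) v * eval v p₄ + imPow (n - 2) v * eval v p₅ ∧
            eval v w = 2 * v 0 * v 1 * eval v p₂ + (v 0 ^ 2 - v 1 ^ 2) * eval v p₃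
              + rePow (n - 2) v * eval v p₅ - imPow (n - 2) v * eval v p₄ := by
  set ζ := exp (↑(2 * Real.pi / n) * I)
  have hn0 : n ≠ 0 := by omega
  have hζ : IsPrimitiveRoot ζ n := by
    convert Complex.isPrimitiveRoot_exp n hn0 using 2
    push_cast
    ring
  simp only [← add_mul_I_eq_sq_mul_add_conj_pow_mul_iff]
  constructor
  · intro hrot
    obtain ⟨g, hg⟩ := exists_eval_conjPair_eq u w
    have heig : twist ζ g = C (ζ ^ 2) * g := eq_of_eval_conjPair_eq fun v => by
      rw [← eval_conjPair_rotMat_mulVec, map_mul, eval_C, hg, hg, hrot]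
    obtain ⟨_, ⟨q, hq, rfl⟩, _, ⟨r, hr, rfl⟩, hqr⟩ := Submodule.mem_sup.1
      (restrictSupport_chargeSupport_two_le hn ((twist_eq_C_pow_mul_iff hζ hn0 2 g).1 heig))
    have hinv : ∀ p ∈ restrictSupport ℂ (chargeSupport n 0),
        ∀ v, eval (conjPair (rotMat (2 * Real.pi / n) *ᵥ v)) p = eval (conjPair v) p := by
      intro p hp v
      rw [eval_conjPair_rotMat_mulVec, (twist_eq_C_pow_mul_iff hζ hn0 0 p).2 (by simpa using hp),
        pow_zero, C_1, one_mul]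
    obtain ⟨p₂, p₃, hq'⟩ := exists_eval_conjPair_eq_re_add_im_mul_I q
    obtain ⟨p₄, p₅, hr'⟩ := exists_eval_conjPair_eq_re_add_im_mul_I r
    obtain ⟨h₂, h₃⟩ := isInvariantUnder_of_eval_conjPair (hinv q hq) hq'
    obtain ⟨h₄, h₅⟩ := isInvariantUnder_of_eval_conjPair (hinv r hr) hr'
    refine ⟨p₂, p₃, p₄, p₅, h₂, h₃, h₄, h₅, fun v => ?_⟩
    rw [← hg, ← hqr, ← hq', ← hr']
    simp [conjPair]
  · rintro ⟨p₂, p₃, p₄, p₅, h₂, h₃, h₄, h₅, hform⟩ v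
    have hζn : ζ⁻¹ ^ (n - 2) = ζ ^ 2 := by
      rw [inv_pow, inv_eq_of_mul_eq_one_right]
      rw [← pow_add, Nat.sub_add_cancel hn, hζ.pow_eq_one]
    rw [hform, hform, planeToComplex_rotMat_mulVec, h₂ v, h₃ v, h₄ v, h₅ v, map_mul,
      conj_exp_ofReal_mul_I, mul_pow, mul_pow, hζn]
    ring

/-- general form of `Z_n`-equivariant quadratic differential forms, `n ≥ 3`:
with `ρ` the rotation of angle `2π/n`, the coefficients `a, b, c` satisfy
`B(ρp) = ρ B(p) ρᵀ` iff they have the stated general form, with `A₁ = Re((x+iy)^{n−2})`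
and `A₂ = Im((x+iy)^{n−2})` and `ρ`-invariant polynomial coefficients `p₁, …, p₅`. -/
theorem zn_equivariant_quadratic_forms (n : ℕ) (hn : 3 ≤ n)
    (a b c : MvPolynomial (Fin 2) ℝ) :
    (∀ p : Fin 2 → ℝ,
      bdeMatrix a b c ((rotMat (2 * Real.pi / n)).mulVec p)
        = rotMat (2 * Real.pi / n) * bdeMatrix a b c p * (rotMat (2 * Real.pi / n))ᵀ)
    ↔ ∃ p₁ p₂ p₃ p₄ p₅ : MvPolynomial (Fin 2) ℝ,
        (∀ v : Fin 2 → ℝ, MvPolynomial.eval ((rotMat (2 * Real.pi / n)).mulVec v) p₁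
          = MvPolynomial.eval v p₁) ∧
        (∀ v : Fin 2 → ℝ, MvPolynomial.eval ((rotMat (2 * Real.pi / n)).mulVec v) p₂
          = MvPolynomial.eval v p₂) ∧
        (∀ v : Fin 2 → ℝ, MvPolynomial.eval ((rotMat (2 * Real.pi / n)).mulVec v) p₃
          = MvPolynomial.eval v p₃) ∧
        (∀ v : Fin 2 → ℝ, MvPolynomial.eval ((rotMat (2 * Real.pi / n)).mulVec v) p₄
          = MvPolynomial.eval v p₄) ∧
        (∀ v : Fin 2 → ℝ, MvPolynomial.eval ((rotMat (2 * Real.pi / n)).mulVec v) p₅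
          = MvPolynomial.eval v p₅) ∧
        (∀ v : Fin 2 → ℝ, MvPolynomial.eval v a
          = MvPolynomial.eval v p₁ + (v 1 ^ 2 - v 0 ^ 2) * MvPolynomial.eval v p₂
            + 2 * v 0 * v 1 * MvPolynomial.eval v p₃
            - rePow (n - 2) v * MvPolynomial.eval v p₄
            - imPow (n - 2) v * MvPolynomial.eval v p₅) ∧
        (∀ v : Fin 2 → ℝ, MvPolynomial.eval v b
          = 2 * v 0 * v 1 * MvPolynomial.eval v p₂
            + (v 0 ^ 2 - v 1 ^ 2) * MvPolynomial.eval v p₃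
            + rePow (n - 2) v * MvPolynomial.eval v p₅
            - imPow (n - 2) v * MvPolynomial.eval v p₄) ∧
        (∀ v : Fin 2 → ℝ, MvPolynomial.eval v c
          = MvPolynomial.eval v p₁ + (v 0 ^ 2 - v 1 ^ 2) * MvPolynomial.eval v p₂
            - 2 * v 0 * v 1 * MvPolynomial.eval v p₃
            + rePow (n - 2) v * MvPolynomial.eval v p₄
            + imPow (n - 2) v * MvPolynomial.eval v p₅) := by
  have hF := forall_eval_rotMat_eq_exp_sq_mul_iff (by omega : 2 ≤ n) (C 2⁻¹ * (c - a)) b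
  simp only [map_mul, map_sub, eval_C] at hF
  simp only [bdeMatrix, rotMat_mul_mul_transpose_eq_iff, forall_and]
  rw [hF]
  constructor
  · rintro ⟨htr, p₂, p₃, p₄, p₅, h₂, h₃, h₄, h₅, hform⟩
    refine ⟨C 2⁻¹ * (a + c), p₂, p₃, p₄, p₅, fun v => ?_, h₂, h₃, h₄, h₅,
      fun v => ?_, fun v => (hform v).2, fun v => ?_⟩
    · simp only [map_mul, map_add, eval_C, htr v]
    · simp only [map_mul, map_add, eval_C]
      linarith [(hform v).1]
    · simp only [map_mul, map_add, eval_C]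
      linarith [(hform v).1]
  · rintro ⟨p₁, p₂, p₃, p₄, p₅, h₁, h₂, h₃, h₄, h₅, ha, hb, hc⟩
    refine ⟨fun v => ?_, p₂, p₃, p₄, p₅, h₂, h₃, h₄, h₅, fun v => ⟨?_, hb v⟩⟩
    · rw [ha, hc, ha v, hc v, h₁ v]
      ring
    · rw [ha, hc]
      ring
end

section
/- Polynomials a, b, c ∈ ℝ[x,y] satisfy the equivariance condition B(R_θ p) = R_θ B(p) R_θᵀ for all p ∈ ℝ² and all θ ∈ [0, 2π) (where B(p) = [[c(p), b(p)], [b(p), a(p)]] and R_θ is the rotation matrix of angle θ) if and only if there exist polynomials q₁, q₂, q₃ in one variable such that, with pᵢ = qᵢ(x² + y²), one has a = p₁ + (y² − x²)p₂ + 2xy·p₃, b = 2xy·p₂ + (x² − y²)p₃, and c = p₁ + (x² − y²)p₂ − 2xy·p₃. -/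
open Matrix

/-!
Encode a symmetric matrix `[[C, B], [B, A]]` by its trace `A + C` and the complex number
`(C - A) + 2Bi`: conjugation by `R_θ` fixes the trace and multiplies the complex number by
`e^{2iθ}`. So equivariance says that `a + c` is rotation invariant and that
`f = (c - a) + 2bi` satisfies `f(R_θ p) = e^{2iθ} f(p)`. Every point is `R_θ (r, 0)`, so both
functions are determined by their restrictions to the `x`-axis, which are polynomials in `r`.
Rotation by `π` makes these restrictions even, and rotation by `π/2` at the origin forces
`f(0) = 0`; hence `a + c = q(r²)` and `f(r, 0) = r² w(r²)`, i.e. `f(z) = z² w(|z|²)`.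
-/

open Polynomial in
theorem Polynomial.expand_contract_two_of_even {R : Type*} [CommRing R] [IsDomain R] [CharZero R]
    {u : R[X]} (h : u.eval.Even) : expand R 2 (contract 2 u) = u := by
  have hcomp : u.comp (C (-1) * X) = u := funext fun x => by simpa using h x
  ext n
  rw [coeff_expand two_pos, coeff_contract two_ne_zero]
  split_ifs with hn
  · rw [Nat.div_mul_cancel hn]
  · have hodd : Odd n := Nat.odd_iff.mpr (by omega)
    have := congrArg (coeff · n) hcomp
    simp only [comp_C_mul_X_coeff, hodd.neg_one_pow, mul_neg_one, neg_eq_self] at this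
    exact this.symm

open Polynomial in
theorem Polynomial.exists_eval_eq_sq_mul_of_even {R : Type*} [CommRing R] [IsDomain R]
    [CharZero R] {u : R[X]} (h : u.eval.Even) (h0 : u.eval 0 = 0) :
    ∃ w : R[X], ∀ x, u.eval x = x ^ 2 * w.eval (x ^ 2) := by
  obtain ⟨w, hw⟩ : X ∣ contract 2 u := by
    rw [X_dvd_iff, coeff_contract two_ne_zero, zero_mul, coeff_zero_eq_eval_zero, h0]
  refine ⟨w, fun x => ?_⟩
  rw [← expand_contract_two_of_even h, expand_eval, hw, eval_mul, eval_X]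

theorem exists_polynomial_eval_axis (P : MvPolynomial (Fin 2) ℝ) :
    ∃ u : Polynomial ℝ, ∀ r, u.eval r = MvPolynomial.eval ![r, 0] P := by
  refine ⟨MvPolynomial.aeval ![Polynomial.X, 0] P, fun r => ?_⟩
  rw [MvPolynomial.aeval_def, MvPolynomial.polynomial_eval_eval₂, ← MvPolynomial.eval₂_id]
  congr 1
  · ext; simp
  · ext i; fin_cases i <;> simp

@[simp]
theorem rotMat_mulVec_apply_zero (θ : ℝ) (v : Fin 2 → ℝ) :
    (rotMat θ *ᵥ v) 0 = Real.cos θ * v 0 - Real.sin θ * v 1 := by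
  simp [rotMat, mulVec, dotProduct, Fin.sum_univ_two, sub_eq_add_neg]

@[simp]
theorem rotMat_mulVec_apply_one (θ : ℝ) (v : Fin 2 → ℝ) :
    (rotMat θ *ᵥ v) 1 = Real.sin θ * v 0 + Real.cos θ * v 1 := by
  simp [rotMat, mulVec, dotProduct, Fin.sum_univ_two]

theorem rotMat_toIcoMod (θ : ℝ) : rotMat (toIcoMod Real.two_pi_pos 0 θ) = rotMat θ := by
  rw [toIcoMod, zsmul_eq_mul, rotMat, rotMat, Real.cos_sub_int_mul_two_pi,
    Real.sin_sub_int_mul_two_pi]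

theorem rotMat_pi : rotMat Real.pi = -1 := by
  ext i j; fin_cases i <;> fin_cases j <;> simp [rotMat]

theorem transpose_rotMat_mul_rotMat (θ : ℝ) : (rotMat θ)ᵀ * rotMat θ = 1 := by
  ext i j
  fin_cases i <;> fin_cases j <;> simp [rotMat, mul_apply, Fin.sum_univ_two, ← sq, mul_comm]

theorem sq_add_sq_rotMat_mulVec (θ : ℝ) (v : Fin 2 → ℝ) :
    (rotMat θ *ᵥ v) 0 ^ 2 + (rotMat θ *ᵥ v) 1 ^ 2 = v 0 ^ 2 + v 1 ^ 2 := by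
  simp only [rotMat_mulVec_apply_zero, rotMat_mulVec_apply_one]
  linear_combination (v 0 ^ 2 + v 1 ^ 2) * Real.sin_sq_add_cos_sq θ

theorem complex_mk_rotMat_mulVec (θ : ℝ) (v : Fin 2 → ℝ) :
    (⟨(rotMat θ *ᵥ v) 0, (rotMat θ *ᵥ v) 1⟩ : ℂ) = Complex.exp (θ * Complex.I) * ⟨v 0, v 1⟩ := by
  apply Complex.ext <;>
    simp only [rotMat_mulVec_apply_zero, rotMat_mulVec_apply_one, Complex.mul_re, Complex.mul_im,
      Complex.exp_ofReal_mul_I_re, Complex.exp_ofReal_mul_I_im]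
  ring

theorem exists_rotMat_mulVec_axis (v : Fin 2 → ℝ) : ∃ θ r, rotMat θ *ᵥ ![r, 0] = v := by
  refine ⟨Complex.arg ⟨v 0, v 1⟩, ‖(⟨v 0, v 1⟩ : ℂ)‖, ?_⟩
  ext i
  fin_cases i <;> simp [mul_comm, Complex.norm_mul_cos_arg, Complex.norm_mul_sin_arg]

def Matrix.deviator (M : Matrix (Fin 2) (Fin 2) ℝ) : ℂ := ⟨M 0 0 - M 1 1, M 0 1 + M 1 0⟩

theorem trace_rotMat_mul_mul_transpose (θ : ℝ) (M : Matrix (Fin 2) (Fin 2) ℝ) :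
    (rotMat θ * M * (rotMat θ)ᵀ).trace = M.trace := by
  rw [trace_mul_comm, ← Matrix.mul_assoc, transpose_rotMat_mul_rotMat, Matrix.one_mul]

theorem deviator_rotMat_mul_mul_transpose (θ : ℝ) (M : Matrix (Fin 2) (Fin 2) ℝ) :
    (rotMat θ * M * (rotMat θ)ᵀ).deviator = Complex.exp (θ * Complex.I) ^ 2 * M.deviator := by
  apply Complex.ext <;>
    simp [deviator, rotMat, mul_apply, vecMul, dotProduct, Fin.sum_univ_two, sq,
      Complex.exp_ofReal_mul_I_re, Complex.exp_ofReal_mul_I_im] <;> ring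

theorem Matrix.IsSymm.mul_mul_transpose {n α : Type*} [Fintype n] [CommSemiring α]
    {B : Matrix n n α} (hB : B.IsSymm) (A : Matrix n n α) : (A * B * Aᵀ).IsSymm := by
  rw [IsSymm, transpose_mul, transpose_mul, transpose_transpose, hB.eq, Matrix.mul_assoc]

theorem Matrix.IsSymm.eq_of_trace_eq_of_deviator_eq {M N : Matrix (Fin 2) (Fin 2) ℝ}
    (hM : M.IsSymm) (hN : N.IsSymm) (htr : M.trace = N.trace) (hdev : M.deviator = N.deviator) :
    M = N := by
  have hre := congrArg Complex.re hdev
  have him := congrArg Complex.im hdev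
  simp only [deviator, trace_fin_two, hM.apply 0 1, hN.apply 0 1] at htr hre him
  ext i j
  fin_cases i <;> fin_cases j <;> simp only [Fin.zero_eta, Fin.mk_one, hM.apply 0 1, hN.apply 0 1] <;>
    linarith

section bdeMatrix

variable (a b c : MvPolynomial (Fin 2) ℝ)

theorem bdeMatrix_isSymm (p : Fin 2 → ℝ) : (bdeMatrix a b c p).IsSymm := by
  ext i j; fin_cases i <;> fin_cases j <;> rfl

theorem trace_bdeMatrix (p : Fin 2 → ℝ) :
    (bdeMatrix a b c p).trace = MvPolynomial.eval p (c + a) := by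
  simp [bdeMatrix, trace_fin_two]

theorem deviator_bdeMatrix (p : Fin 2 → ℝ) :
    (bdeMatrix a b c p).deviator = ⟨MvPolynomial.eval p (c - a), MvPolynomial.eval p (2 * b)⟩ := by
  simp [bdeMatrix, deviator, two_mul]

theorem bdeMatrix_rotMat_mulVec_eq_iff (θ : ℝ) (p : Fin 2 → ℝ) :
    bdeMatrix a b c (rotMat θ *ᵥ p) = rotMat θ * bdeMatrix a b c p * (rotMat θ)ᵀ ↔
      (bdeMatrix a b c (rotMat θ *ᵥ p)).trace = (bdeMatrix a b c p).trace ∧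
      (bdeMatrix a b c (rotMat θ *ᵥ p)).deviator =
        Complex.exp (θ * Complex.I) ^ 2 * (bdeMatrix a b c p).deviator := by
  rw [← trace_rotMat_mul_mul_transpose θ (bdeMatrix a b c p),
    ← deviator_rotMat_mul_mul_transpose θ (bdeMatrix a b c p)]
  refine ⟨fun h => h ▸ ⟨rfl, rfl⟩, fun ⟨htr, hdev⟩ => ?_⟩
  exact (bdeMatrix_isSymm a b c _).eq_of_trace_eq_of_deviator_eq
    ((bdeMatrix_isSymm a b c p).mul_mul_transpose _) htr hdev

theorem forall_mem_Ico_bdeMatrix_equivariance_iff :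
    (∀ θ ∈ Set.Ico (0 : ℝ) (2 * Real.pi), ∀ p : Fin 2 → ℝ,
      bdeMatrix a b c (rotMat θ *ᵥ p) = rotMat θ * bdeMatrix a b c p * (rotMat θ)ᵀ) ↔
    ∀ θ p, bdeMatrix a b c (rotMat θ *ᵥ p) = rotMat θ * bdeMatrix a b c p * (rotMat θ)ᵀ := by
  refine ⟨fun h θ => ?_, fun h θ _ => h θ⟩
  rw [← rotMat_toIcoMod]
  exact h _ (toIcoMod_mem_Ico' _ θ)

end bdeMatrix

theorem eval_rotMat_mulVec_invariant_iff (P : MvPolynomial (Fin 2) ℝ) :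
    (∀ θ v, MvPolynomial.eval (rotMat θ *ᵥ v) P = MvPolynomial.eval v P) ↔
      ∃ q : Polynomial ℝ, ∀ v, MvPolynomial.eval v P = q.eval (v 0 ^ 2 + v 1 ^ 2) := by
  constructor
  · intro h
    obtain ⟨u, hu⟩ := exists_polynomial_eval_axis P
    have heven : u.eval.Even := fun r => by simpa [rotMat_pi, hu] using h Real.pi ![r, 0]
    refine ⟨Polynomial.contract 2 u, fun v => ?_⟩
    obtain ⟨θ, r, rfl⟩ := exists_rotMat_mulVec_axis v
    have hr : ![r, (0 : ℝ)] 0 ^ 2 + ![r, (0 : ℝ)] 1 ^ 2 = r ^ 2 := by simp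
    rw [h, sq_add_sq_rotMat_mulVec, hr, ← hu, ← Polynomial.expand_eval,
      Polynomial.expand_contract_two_of_even heven]
  · rintro ⟨q, hq⟩ θ v
    rw [hq, hq, sq_add_sq_rotMat_mulVec]

theorem eval_rotMat_mulVec_covariant_iff (P Q : MvPolynomial (Fin 2) ℝ) :
    (∀ θ v, (⟨MvPolynomial.eval (rotMat θ *ᵥ v) P, MvPolynomial.eval (rotMat θ *ᵥ v) Q⟩ : ℂ) =
        Complex.exp (θ * Complex.I) ^ 2 * ⟨MvPolynomial.eval v P, MvPolynomial.eval v Q⟩) ↔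
      ∃ s t : Polynomial ℝ, ∀ v, (⟨MvPolynomial.eval v P, MvPolynomial.eval v Q⟩ : ℂ) =
        ⟨v 0, v 1⟩ ^ 2 * ⟨s.eval (v 0 ^ 2 + v 1 ^ 2), t.eval (v 0 ^ 2 + v 1 ^ 2)⟩ := by
  constructor
  · intro h
    obtain ⟨uP, huP⟩ := exists_polynomial_eval_axis P
    obtain ⟨uQ, huQ⟩ := exists_polynomial_eval_axis Q
    have heven : uP.eval.Even ∧ uQ.eval.Even := by
      have hpi := fun r => h Real.pi ![r, 0]
      simp only [rotMat_pi, Complex.exp_pi_mul_I, Complex.ext_iff] at hpi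
      exact ⟨fun r => by simpa [huP] using (hpi r).1, fun r => by simpa [huQ] using (hpi r).2⟩
    have hzero : uP.eval 0 = 0 ∧ uQ.eval 0 = 0 := by
      have h0 := h (Real.pi / 2) 0
      rw [mulVec_zero, Complex.ofReal_div, Complex.ofReal_ofNat, Complex.exp_pi_div_two_mul_I,
        Complex.I_sq, neg_one_mul, self_eq_neg, Complex.ext_iff] at h0
      rw [huP, huQ, ← Matrix.zero_empty, Matrix.cons_zero_zero, Matrix.cons_zero_zero]
      simpa using h0
    obtain ⟨s, hs⟩ := Polynomial.exists_eval_eq_sq_mul_of_even heven.1 hzero.1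
    obtain ⟨t, ht⟩ := Polynomial.exists_eval_eq_sq_mul_of_even heven.2 hzero.2
    refine ⟨s, t, fun v => ?_⟩
    obtain ⟨θ, r, rfl⟩ := exists_rotMat_mulVec_axis v
    have hr : ![r, (0 : ℝ)] 0 ^ 2 + ![r, (0 : ℝ)] 1 ^ 2 = r ^ 2 := by simp
    have hmk : ∀ x y : ℝ, (⟨r ^ 2 * x, r ^ 2 * y⟩ : ℂ) = (r : ℂ) ^ 2 * ⟨x, y⟩ := fun x y => by
      apply Complex.ext <;> simp [← Complex.ofReal_pow]
    rw [h, complex_mk_rotMat_mulVec, sq_add_sq_rotMat_mulVec, hr, ← huP, ← huQ, hs, ht, hmk]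
    simp only [Matrix.cons_val_zero, Matrix.cons_val_one]
    rw [show (⟨r, 0⟩ : ℂ) = r from rfl]
    ring
  · rintro ⟨s, t, hst⟩ θ v
    rw [hst, hst, complex_mk_rotMat_mulVec, sq_add_sq_rotMat_mulVec]
    ring

/-- general form of `SO(2)`-equivariant quadratic differential forms:
`B(R_θ p) = R_θ B(p) R_θᵀ` for all `θ ∈ [0, 2π)` iff, with `pᵢ = qᵢ(x² + y²)` for
one-variable polynomials `q₁, q₂, q₃`, one has `a = p₁ + (y² − x²)p₂ + 2xy·p₃`,
`b = 2xy·p₂ + (x² − y²)p₃`, `c = p₁ + (x² − y²)p₂ − 2xy·p₃`. -/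
theorem so2_equivariant_quadratic_forms (a b c : MvPolynomial (Fin 2) ℝ) :
    (∀ θ ∈ Set.Ico (0 : ℝ) (2 * Real.pi), ∀ p : Fin 2 → ℝ,
      bdeMatrix a b c ((rotMat θ).mulVec p)
        = rotMat θ * bdeMatrix a b c p * (rotMat θ)ᵀ)
    ↔ ∃ q₁ q₂ q₃ : Polynomial ℝ,
        (∀ v : Fin 2 → ℝ, MvPolynomial.eval v a
          = Polynomial.eval (v 0 ^ 2 + v 1 ^ 2) q₁
            + (v 1 ^ 2 - v 0 ^ 2) * Polynomial.eval (v 0 ^ 2 + v 1 ^ 2) q₂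
            + 2 * v 0 * v 1 * Polynomial.eval (v 0 ^ 2 + v 1 ^ 2) q₃) ∧
        (∀ v : Fin 2 → ℝ, MvPolynomial.eval v b
          = 2 * v 0 * v 1 * Polynomial.eval (v 0 ^ 2 + v 1 ^ 2) q₂
            + (v 0 ^ 2 - v 1 ^ 2) * Polynomial.eval (v 0 ^ 2 + v 1 ^ 2) q₃) ∧
        (∀ v : Fin 2 → ℝ, MvPolynomial.eval v c
          = Polynomial.eval (v 0 ^ 2 + v 1 ^ 2) q₁
            + (v 0 ^ 2 - v 1 ^ 2) * Polynomial.eval (v 0 ^ 2 + v 1 ^ 2) q₂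
            - 2 * v 0 * v 1 * Polynomial.eval (v 0 ^ 2 + v 1 ^ 2) q₃) := by
  rw [forall_mem_Ico_bdeMatrix_equivariance_iff]
  simp only [bdeMatrix_rotMat_mulVec_eq_iff, trace_bdeMatrix, deviator_bdeMatrix, forall_and]
  rw [eval_rotMat_mulVec_invariant_iff, eval_rotMat_mulVec_covariant_iff]
  constructor
  · rintro ⟨⟨q, hq⟩, s, t, hst⟩
    refine ⟨.C (1 / 2) * q, .C (1 / 2) * s, .C (1 / 2) * t,
      fun v => ?_, fun v => ?_, fun v => ?_⟩ <;>
    · have htr := hq v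
      obtain ⟨hre, him⟩ := Complex.ext_iff.1 (hst v)
      simp only [map_add, map_sub, map_mul, MvPolynomial.eval_ofNat, Polynomial.eval_mul,
        Polynomial.eval_C, Complex.mul_re, Complex.mul_im, sq] at htr hre him ⊢
      linarith
  · rintro ⟨q₁, q₂, q₃, ha, hb, hc⟩
    refine ⟨⟨2 * q₁, fun v => ?_⟩, 2 * q₂, 2 * q₃, fun v => ?_⟩
    · simp only [map_add, ha, hc, Polynomial.eval_mul, Polynomial.eval_ofNat]
      ring
    · apply Complex.ext <;>
        simp only [map_sub, map_mul, MvPolynomial.eval_ofNat, ha, hb, hc, Polynomial.eval_mul,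
          Polynomial.eval_ofNat, Complex.mul_re, Complex.mul_im, sq] <;> ring
end

section
/- Polynomials a, b, c ∈ ℝ[x,y] satisfy the equivariance condition B(γp) = det(γ) · γ B(p) γᵀ for all p ∈ ℝ² and all γ ∈ O(2) (where B(p) = [[c(p), b(p)], [b(p), a(p)]]) if and only if there exists a polynomial q in one variable such that, with p₀ = q(x² + y²), one has a = 2xy·p₀, b = (x² − y²)·p₀, and c = −2xy·p₀. -/
open Matrix

/-!
Let `J` be the quarter turn and `M(p) = p (Jp)ᵀ + (Jp) pᵀ = [[-2xy, x²-y²], [x²-y², 2xy]]`.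
Every `2 × 2` matrix satisfies `A J Aᵀ = det A • J`, so an orthogonal `γ` has `J γ = det γ • γ J`,
whence `M(γp) = det γ • γ M(p) γᵀ`; as `γ` also preserves `|p|²`, every `q(|p|²) M(p)` is
equivariant.

Conversely, equivariance under the reflection `(x, y) ↦ (x, -y)` kills `a` and `c` on the
x-axis, so there `B(t, 0) = f(t) M(1, 0)` with `f(t) = b(t, 0)`. Taking `γ = -1` makes `f` even,
and `γ = J` at the origin gives `f(0) = 0`, so `f(t) = t² q(t²)`, i.e. `B = q(|p|²) M` on the
x-axis. Two equivariant maps agreeing on the x-axis agree on all its rotations, the whole plane.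
-/

open Polynomial

namespace Polynomial

variable {R : Type*} [CommRing R]

lemma coeff_comp_neg_X (p : R[X]) (n : ℕ) : (p.comp (-X)).coeff n = (-1) ^ n * p.coeff n := by
  induction p using Polynomial.induction_on' with
  | add p q hp hq => simp [add_comp, hp, hq, mul_add]
  | monomial k a =>
    rw [monomial_comp, neg_pow, ← C_1, ← C_neg, ← C_pow, ← mul_assoc, ← C_mul, coeff_C_mul_X_pow,
      coeff_monomial]
    rcases eq_or_ne n k with rfl | h
    · simp [mul_comm]
    · simp [h, h.symm]

lemma expand_contract_two_of_comp_neg_X [NoZeroDivisors R] [CharZero R] {p : R[X]}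
    (hp : p.comp (-X) = p) : expand R 2 (contract 2 p) = p := by
  ext n
  rw [coeff_expand two_pos]
  split_ifs with h
  · rw [coeff_contract two_ne_zero, Nat.div_mul_cancel h]
  · have hn : Odd n := Nat.not_even_iff_odd.mp (even_iff_two_dvd.not.mpr h)
    have hcoeff := coeff_comp_neg_X p n
    rw [hp, hn.neg_one_pow, neg_one_mul, CharZero.eq_neg_self_iff] at hcoeff
    exact hcoeff.symm

lemma exists_eval_eq_eval_sq_of_even [IsDomain R] [CharZero R] {p : R[X]}
    (hp : Function.Even p.eval) : ∃ q : R[X], ∀ t, p.eval t = q.eval (t ^ 2) := by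
  have hcomp : p.comp (-X) = p := Polynomial.funext fun t => by simp [hp t]
  exact ⟨contract 2 p, fun t => by rw [← expand_eval, expand_contract_two_of_comp_neg_X hcomp]⟩

end Polynomial

section OrthogonalGroup

variable {R : Type*} [CommRing R]

lemma det_mul_self_of_mem_orthogonalGroup {n : Type*} [Fintype n] [DecidableEq n]
    {γ : Matrix n n R} (hγ : γ ∈ orthogonalGroup n R) : γ.det * γ.det = 1 := by
  simpa using congrArg det ((mem_orthogonalGroup_iff' n R).mp hγ)

lemma dotProduct_mulVec_mulVec_of_mem_orthogonalGroup {n : Type*} [Fintype n] [DecidableEq n]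
    {γ : Matrix n n R} (hγ : γ ∈ orthogonalGroup n R) (u w : n → R) :
    γ *ᵥ u ⬝ᵥ γ *ᵥ w = u ⬝ᵥ w := by
  rw [dotProduct_mulVec, ← mulVec_transpose, mulVec_mulVec, (mem_orthogonalGroup_iff' n R).mp hγ,
    one_mulVec]

lemma dotProduct_self_fin_two (p : Fin 2 → R) : p ⬝ᵥ p = p 0 ^ 2 + p 1 ^ 2 := by
  simp [dotProduct, sq]

lemma vecMulVec_mulVec_mulVec {m n : Type*} [Fintype n] (A : Matrix m n R) (u w : n → R) :
    vecMulVec (A *ᵥ u) (A *ᵥ w) = A * vecMulVec u w * Aᵀ := by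
  rw [mul_vecMulVec, vecMulVec_mul, vecMul_transpose]

def quarterTurn : Matrix (Fin 2) (Fin 2) R := !![0, -1; 1, 0]

lemma quarterTurn_mem_orthogonalGroup :
    (quarterTurn : Matrix (Fin 2) (Fin 2) R) ∈ orthogonalGroup (Fin 2) R :=
  (mem_specialOrthogonalGroup_iff.mp <| of_mem_specialOrthogonalGroup_fin_two_iff.mpr
    ⟨rfl, rfl, by simp⟩).1

lemma mul_quarterTurn_mul_transpose (A : Matrix (Fin 2) (Fin 2) R) :
    A * quarterTurn * Aᵀ = A.det • quarterTurn := by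
  ext i j
  fin_cases i <;> fin_cases j <;> simp [quarterTurn, det_fin_two, mul_apply] <;> ring

lemma quarterTurn_mul_of_mem_orthogonalGroup {γ : Matrix (Fin 2) (Fin 2) R}
    (hγ : γ ∈ orthogonalGroup (Fin 2) R) : quarterTurn * γ = γ.det • (γ * quarterTurn) :=
  calc quarterTurn * γ = (γ.det * γ.det) • (quarterTurn * γ) := by
        rw [det_mul_self_of_mem_orthogonalGroup hγ, one_smul]
    _ = γ.det • (γ * quarterTurn * γᵀ * γ) := by
        rw [mul_quarterTurn_mul_transpose, smul_mul_assoc, mul_smul]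
    _ = γ.det • (γ * quarterTurn) := by
        rw [Matrix.mul_assoc _ γᵀ, (mem_orthogonalGroup_iff' _ _).mp hγ, Matrix.mul_one]

def spinTwoForm (p : Fin 2 → R) : Matrix (Fin 2) (Fin 2) R :=
  vecMulVec p (quarterTurn *ᵥ p) + vecMulVec (quarterTurn *ᵥ p) p

lemma spinTwoForm_eq (p : Fin 2 → R) : spinTwoForm p =
    !![-(2 * p 0 * p 1), p 0 ^ 2 - p 1 ^ 2; p 0 ^ 2 - p 1 ^ 2, 2 * p 0 * p 1] := by
  ext i j
  simp only [spinTwoForm, Matrix.add_apply, vecMulVec_apply]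
  fin_cases i <;> fin_cases j <;> simp [quarterTurn, vecHead, vecTail] <;> ring

lemma spinTwoForm_smul (r : R) (p : Fin 2 → R) :
    spinTwoForm (r • p) = r ^ 2 • spinTwoForm p := by
  simp only [spinTwoForm, mulVec_smul, vecMulVec_smul, smul_vecMulVec, smul_add, smul_smul, sq]

lemma spinTwoForm_mulVec {γ : Matrix (Fin 2) (Fin 2) R} (hγ : γ ∈ orthogonalGroup (Fin 2) R)
    (p : Fin 2 → R) : spinTwoForm (γ *ᵥ p) = γ.det • (γ * spinTwoForm p * γᵀ) := by
  have hJ : quarterTurn *ᵥ γ *ᵥ p = γ.det • γ *ᵥ quarterTurn *ᵥ p := by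
    rw [mulVec_mulVec, quarterTurn_mul_of_mem_orthogonalGroup hγ, smul_mulVec, ← mulVec_mulVec]
  simp only [spinTwoForm, hJ, vecMulVec_smul, smul_vecMulVec, vecMulVec_mulVec_mulVec,
    Matrix.mul_add, Matrix.add_mul, smul_add]

def IsO2SO2Equivariant (B : (Fin 2 → R) → Matrix (Fin 2) (Fin 2) R) : Prop :=
  ∀ γ ∈ orthogonalGroup (Fin 2) R, ∀ p, B (γ *ᵥ p) = γ.det • (γ * B p * γᵀ)

lemma isO2SO2Equivariant_smul_spinTwoForm (f : R → R) :
    IsO2SO2Equivariant fun p : Fin 2 → R => f (p ⬝ᵥ p) • spinTwoForm p := by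
  intro γ hγ p
  dsimp only
  rw [dotProduct_mulVec_mulVec_of_mem_orthogonalGroup hγ, spinTwoForm_mulVec hγ, smul_comm,
    Matrix.mul_smul, Matrix.smul_mul]

end OrthogonalGroup

lemma rotMat_mem_orthogonalGroup (θ : ℝ) : rotMat θ ∈ orthogonalGroup (Fin 2) ℝ :=
  (mem_specialOrthogonalGroup_iff.mp <| of_mem_specialOrthogonalGroup_fin_two_iff.mpr
    ⟨rfl, rfl, by rw [neg_sq, add_comm, Real.sin_sq_add_cos_sq]⟩).1

lemma exists_eq_rotMat_mulVec (v : Fin 2 → ℝ) : ∃ r θ : ℝ, v = rotMat θ *ᵥ ![r, 0] := by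
  set z : ℂ := ⟨v 0, v 1⟩
  refine ⟨‖z‖, z.arg, ?_⟩
  ext i
  fin_cases i
  · simp [rotMat, Complex.norm_mul_cos_arg, z]
  · simp [rotMat, Complex.norm_mul_sin_arg, z]

lemma IsO2SO2Equivariant.eq_of_forall_axis_eq {B B' : (Fin 2 → ℝ) → Matrix (Fin 2) (Fin 2) ℝ}
    (hB : IsO2SO2Equivariant B) (hB' : IsO2SO2Equivariant B')
    (h : ∀ t, B ![t, 0] = B' ![t, 0]) : B = B' := by
  ext1 v
  obtain ⟨r, θ, rfl⟩ := exists_eq_rotMat_mulVec v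
  rw [hB _ (rotMat_mem_orthogonalGroup θ), hB' _ (rotMat_mem_orthogonalGroup θ), h]

section bdeMatrix

variable {a b c : MvPolynomial (Fin 2) ℝ}

lemma bdeMatrix_eq_smul_spinTwoForm_iff {p : Fin 2 → ℝ} {s : ℝ} :
    bdeMatrix a b c p = s • spinTwoForm p ↔
      MvPolynomial.eval p a = 2 * p 0 * p 1 * s ∧
        MvPolynomial.eval p b = (p 0 ^ 2 - p 1 ^ 2) * s ∧
        MvPolynomial.eval p c = -(2 * p 0 * p 1) * s := by
  simp only [bdeMatrix, spinTwoForm_eq, ← Matrix.ext_iff, Fin.forall_fin_two]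
  simp [mul_comm s, and_comm, and_assoc]

lemma bdeMatrix_axis_eq_smul_spinTwoForm (H : IsO2SO2Equivariant (bdeMatrix a b c)) (t : ℝ) :
    bdeMatrix a b c ![t, 0] = MvPolynomial.eval ![t, 0] b • spinTwoForm ![1, 0] := by
  have hS : !![(1 : ℝ), 0; 0, -1] ∈ orthogonalGroup (Fin 2) ℝ := by
    rw [mem_orthogonalGroup_iff]
    ext i j
    fin_cases i <;> fin_cases j <;> simp [mul_apply]
  have hSt : !![(1 : ℝ), 0; 0, -1] *ᵥ ![t, 0] = ![t, 0] := by
    ext i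
    fin_cases i <;> simp
  have h := H _ hS ![t, 0]
  rw [hSt, det_fin_two_of] at h
  have hc : MvPolynomial.eval ![t, 0] c = 0 := by
    simpa [bdeMatrix, vecMul, dotProduct, CharZero.eq_neg_self_iff] using congr_fun₂ h 0 0
  have ha : MvPolynomial.eval ![t, 0] a = 0 := by
    simpa [bdeMatrix, vecMul, dotProduct, CharZero.eq_neg_self_iff] using congr_fun₂ h 1 1
  ext i j
  fin_cases i <;> fin_cases j <;> simp [bdeMatrix, spinTwoForm_eq, hc, ha]

theorem IsO2SO2Equivariant.exists_bdeMatrix_eq (H : IsO2SO2Equivariant (bdeMatrix a b c)) :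
    ∃ q : ℝ[X], bdeMatrix a b c = fun p => q.eval (p ⬝ᵥ p) • spinTwoForm p := by
  set f : ℝ[X] := MvPolynomial.aeval ![X, 0] b
  have hf : ∀ t, f.eval t = MvPolynomial.eval ![t, 0] b := by
    intro t
    rw [← coe_aeval_eq_eval, MvPolynomial.comp_aeval_apply, ← MvPolynomial.aeval_eq_eval]
    congr
    ext i
    fin_cases i <;> simp
  have heven : Function.Even f.eval := by
    intro t
    simpa [hf, bdeMatrix, det_neg] using
      congr_fun₂ (H (-1) (by simp [mem_orthogonalGroup_iff]) ![t, 0]) 0 1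
  have hzero : f.eval 0 = 0 := by
    rw [hf, show (![0, 0] : Fin 2 → ℝ) = 0 by simp]
    simpa [bdeMatrix, quarterTurn, vecMul, dotProduct, CharZero.eq_neg_self_iff] using
      congr_fun₂ (H quarterTurn quarterTurn_mem_orthogonalGroup 0) 0 1
  obtain ⟨g, hg⟩ := exists_eval_eq_eval_sq_of_even heven
  obtain ⟨q, rfl⟩ : X ∣ g := by
    rw [X_dvd_iff, coeff_zero_eq_eval_zero]
    simpa [hzero] using (hg 0).symm
  refine ⟨q, H.eq_of_forall_axis_eq (isO2SO2Equivariant_smul_spinTwoForm q.eval) fun t => ?_⟩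
  have hv : (![t, 0] : Fin 2 → ℝ) = t • ![1, 0] := by simp
  have hn : (![t, 0] : Fin 2 → ℝ) ⬝ᵥ ![t, 0] = t ^ 2 := by simp [sq]
  rw [bdeMatrix_axis_eq_smul_spinTwoForm H, ← hf, hg, hn, hv, spinTwoForm_smul, smul_smul,
    eval_mul, eval_X, mul_comm]

theorem isO2SO2Equivariant_bdeMatrix_iff (a b c : MvPolynomial (Fin 2) ℝ) :
    IsO2SO2Equivariant (bdeMatrix a b c) ↔
      ∃ q : ℝ[X], ∀ p, bdeMatrix a b c p = q.eval (p ⬝ᵥ p) • spinTwoForm p :=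
  ⟨fun H => H.exists_bdeMatrix_eq.imp fun _ hq => congr_fun hq,
    fun ⟨q, hq⟩ => funext hq ▸ isO2SO2Equivariant_smul_spinTwoForm q.eval⟩

end bdeMatrix

/-- general form of `O(2)[SO(2)]`-equivariant quadratic differential forms:
`B(γp) = det(γ) · γ B(p) γᵀ` for all `γ ∈ O(2)` iff, with `p₀ = q(x² + y²)` for a
one-variable polynomial `q`, one has `a = 2xy·p₀`, `b = (x² − y²)·p₀`, `c = −2xy·p₀`. -/
theorem o2_so2_equivariant_quadratic_forms (a b c : MvPolynomial (Fin 2) ℝ) :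
    (∀ γ : Matrix.orthogonalGroup (Fin 2) ℝ, ∀ p : Fin 2 → ℝ,
      bdeMatrix a b c ((γ : Matrix (Fin 2) (Fin 2) ℝ).mulVec p)
        = (γ : Matrix (Fin 2) (Fin 2) ℝ).det •
            ((γ : Matrix (Fin 2) (Fin 2) ℝ) * bdeMatrix a b c p
              * (γ : Matrix (Fin 2) (Fin 2) ℝ)ᵀ))
    ↔ ∃ q : Polynomial ℝ,
        (∀ v : Fin 2 → ℝ, MvPolynomial.eval v a
          = 2 * v 0 * v 1 * Polynomial.eval (v 0 ^ 2 + v 1 ^ 2) q) ∧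
        (∀ v : Fin 2 → ℝ, MvPolynomial.eval v b
          = (v 0 ^ 2 - v 1 ^ 2) * Polynomial.eval (v 0 ^ 2 + v 1 ^ 2) q) ∧
        (∀ v : Fin 2 → ℝ, MvPolynomial.eval v c
          = -(2 * v 0 * v 1) * Polynomial.eval (v 0 ^ 2 + v 1 ^ 2) q) := by
  have key := isO2SO2Equivariant_bdeMatrix_iff a b c
  simp only [IsO2SO2Equivariant, bdeMatrix_eq_smul_spinTwoForm_iff, dotProduct_self_fin_two,
    forall_and] at key
  simpa only [Subtype.forall] using key
end

section
/- Let a, b, c ∈ ℝ[x,y] be homogeneous polynomials of degree 1 (i.e. linear forms) such that B(p) = [[c(p), b(p)], [b(p), a(p)]] satisfies B(R_θ p) = R_θ B(p) R_θᵀ for all p ∈ ℝ² and all θ ∈ [0, 2π). Then a = b = c = 0. In particular, there is no nonzero binary differential equation with linear coefficients that is invariant under the full rotation group SO(2). -/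
open Matrix

lemma eval_neg_of_hom1 {a : MvPolynomial (Fin 2) ℝ} (ha : a.IsHomogeneous 1)
    (p : Fin 2 → ℝ) : MvPolynomial.eval (fun i => -p i) a = -MvPolynomial.eval p a := by
  rw [MvPolynomial.eval_eq', MvPolynomial.eval_eq', ← Finset.sum_neg_distrib]
  refine Finset.sum_congr rfl fun d hd => ?_
  have hdeg : ∑ i, d i = 1 := by
    have h1 := ha (MvPolynomial.mem_support_iff.mp hd)
    have h2 : d.degree = 1 := by
      rw [Finsupp.degree_eq_weight_one]; exact h1
    rw [Finsupp.degree] at h2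
    rw [← h2]
    exact (Finset.sum_subset (Finset.subset_univ d.support)
      (fun i _ hi => Finsupp.notMem_support_iff.mp hi)).symm
  have hprod : ∏ i, (-p i) ^ d i = -∏ i, (p i) ^ d i := by
    calc ∏ i, (-p i) ^ d i = ∏ i, ((-1 : ℝ) ^ d i * (p i) ^ d i) :=
          Finset.prod_congr rfl fun i _ => by rw [neg_pow]
      _ = ((-1 : ℝ) ^ ∑ i, d i) * ∏ i, (p i) ^ d i := by
          rw [Finset.prod_mul_distrib, Finset.prod_pow_eq_pow_sum]
      _ = -∏ i, (p i) ^ d i := by rw [hdeg]; ring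
  rw [hprod]; ring

/-- there is no nonzero `SO(2)`-invariant binary differential equation with
linear coefficients: if `a, b, c` are homogeneous of degree 1 and
`B(R_θ p) = R_θ B(p) R_θᵀ` for all `θ ∈ [0, 2π)`, then `a = b = c = 0`. -/
theorem no_linear_so2_equivariant_bde (a b c : MvPolynomial (Fin 2) ℝ)
    (ha : a.IsHomogeneous 1) (hb : b.IsHomogeneous 1) (hc : c.IsHomogeneous 1)
    (hB : ∀ θ ∈ Set.Ico (0 : ℝ) (2 * Real.pi), ∀ p : Fin 2 → ℝ,
      bdeMatrix a b c ((rotMat θ).mulVec p)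
        = rotMat θ * bdeMatrix a b c p * (rotMat θ)ᵀ) :
    a = 0 ∧ b = 0 ∧ c = 0 := by
  have hpi : Real.pi ∈ Set.Ico (0 : ℝ) (2 * Real.pi) := by
    constructor
    · exact Real.pi_pos.le
    · linarith [Real.pi_pos]
  have key : ∀ p : Fin 2 → ℝ, bdeMatrix a b c (fun i => -p i) = bdeMatrix a b c p := by
    intro p
    have h := hB Real.pi hpi p
    have hrot : rotMat Real.pi = -1 := by
      simp [rotMat]
      ext i j
      fin_cases i <;> fin_cases j <;> simp [rotMat]
    rw [hrot] at h
    have hv : (-1 : Matrix (Fin 2) (Fin 2) ℝ).mulVec p = fun i => -p i := by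
      rw [Matrix.neg_mulVec, Matrix.one_mulVec]
      rfl
    rw [hv] at h
    simpa using h
  have hzero : ∀ (q : MvPolynomial (Fin 2) ℝ), q.IsHomogeneous 1 →
      (∀ p : Fin 2 → ℝ, MvPolynomial.eval (fun i => -p i) q = MvPolynomial.eval p q) → q = 0 := by
    intro q hq hinv
    apply MvPolynomial.funext
    intro p
    have h1 := hinv p
    have h2 := eval_neg_of_hom1 hq p
    rw [h2] at h1
    have : MvPolynomial.eval p q = 0 := by linarith
    simpa using this
  refine ⟨hzero a ha fun p => ?_, hzero b hb fun p => ?_, hzero c hc fun p => ?_⟩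
  · simpa [bdeMatrix] using congrFun (congrFun (key p) 1) 1
  · simpa [bdeMatrix] using congrFun (congrFun (key p) 0) 1
  · simpa [bdeMatrix] using congrFun (congrFun (key p) 0) 0
end
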